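/- Let c, g₁, g₂ be real numbers and let φ, y : ℝ → ℝ be differentiable functions satisfying the system φ'(ζ) = (1/2)(φ(ζ) - c)² y(ζ) and y'(ζ) = (φ(ζ) - c)(g₁ - y(ζ)²/2 - φ(ζ)²) - 2g₂ φ(ζ). Then the Hamiltonian H(φ, y) = φ⁴ - (4c/3)φ³ + (4g₂ - 2g₁)φ² + 4c g₁ φ + (φ - c)² y² is constant along the solution, i.e., ζ ↦ H(φ(ζ), y(ζ)) is a constant function. -/

import Mathlib

/-! The regularized system is Hamiltonian up to the factor `1/4`:
`φ' = (1/4) ∂H/∂y` and `y' = -(1/4) ∂H/∂φ`. Hence `d/dζ H(φ, y) = H_φ φ' + H_y y' = 0`,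
and a function with vanishing derivative on `ℝ` is constant. -/

namespace DualKaupBoussinesq

variable (c g₁ g₂ : ℝ)

noncomputable def hamiltonian (p q : ℝ) : ℝ :=
  p ^ 4 - (4 * c / 3) * p ^ 3 + (4 * g₂ - 2 * g₁) * p ^ 2 + 4 * c * g₁ * p + (p - c) ^ 2 * q ^ 2

def hamiltonianDerivFst (p q : ℝ) : ℝ :=
  4 * p ^ 3 - 4 * c * p ^ 2 + 2 * (4 * g₂ - 2 * g₁) * p + 4 * c * g₁ + 2 * (p - c) * q ^ 2

def hamiltonianDerivSnd (p q : ℝ) : ℝ :=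
  2 * (p - c) ^ 2 * q

theorem hasDerivAt_hamiltonian_comp {φ y : ℝ → ℝ} {φ' y' ζ : ℝ}
    (hφ : HasDerivAt φ φ' ζ) (hy : HasDerivAt y y' ζ) :
    HasDerivAt (fun z => hamiltonian c g₁ g₂ (φ z) (y z))
      (hamiltonianDerivFst c g₁ g₂ (φ ζ) (y ζ) * φ' + hamiltonianDerivSnd c (φ ζ) (y ζ) * y') ζ := by
  have h : HasDerivAt (fun z => hamiltonian c g₁ g₂ (φ z) (y z)) _ ζ :=
    ((((hφ.pow 4).sub ((hφ.pow 3).const_mul (4 * c / 3))).add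
      ((hφ.pow 2).const_mul (4 * g₂ - 2 * g₁))).add (hφ.const_mul (4 * c * g₁))).add
      (((hφ.sub_const c).pow 2).mul (hy.pow 2))
  convert h using 1
  simp only [hamiltonianDerivFst, hamiltonianDerivSnd, Pi.pow_apply]
  push_cast
  ring

theorem half_sq_mul_eq_hamiltonianDerivSnd_div_four (p q : ℝ) :
    (1 / 2) * (p - c) ^ 2 * q = hamiltonianDerivSnd c p q / 4 := by
  simp only [hamiltonianDerivSnd]
  ring

theorem field_snd_eq_neg_hamiltonianDerivFst_div_four (p q : ℝ) :
    (p - c) * (g₁ - q ^ 2 / 2 - p ^ 2) - 2 * g₂ * p = -hamiltonianDerivFst c g₁ g₂ p q / 4 := by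
  simp only [hamiltonianDerivFst]
  ring

theorem hamiltonian_comp_eq {φ y : ℝ → ℝ} (hφ : Differentiable ℝ φ) (hy : Differentiable ℝ y)
    (heq1 : ∀ ζ, deriv φ ζ = (1 / 2) * (φ ζ - c) ^ 2 * y ζ)
    (heq2 : ∀ ζ, deriv y ζ = (φ ζ - c) * (g₁ - y ζ ^ 2 / 2 - φ ζ ^ 2) - 2 * g₂ * φ ζ)
    (ζ₁ ζ₂ : ℝ) :
    hamiltonian c g₁ g₂ (φ ζ₁) (y ζ₁) = hamiltonian c g₁ g₂ (φ ζ₂) (y ζ₂) := by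
  have hderiv : ∀ ζ, HasDerivAt (fun z => hamiltonian c g₁ g₂ (φ z) (y z)) 0 ζ := by
    intro ζ
    convert hasDerivAt_hamiltonian_comp c g₁ g₂ (hφ ζ).hasDerivAt (hy ζ).hasDerivAt using 1
    rw [heq1, heq2, half_sq_mul_eq_hamiltonianDerivSnd_div_four, field_snd_eq_neg_hamiltonianDerivFst_div_four]
    ring
  exact is_const_of_deriv_eq_zero (fun ζ => (hderiv ζ).differentiableAt)
    (fun ζ => (hderiv ζ).deriv) ζ₁ ζ₂

end DualKaupBoussinesq

/-- Along any solution `(φ, y)` of the regularized travelling-wave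
system `φ' = (1/2)(φ - c)²y`, `y' = (φ - c)(g₁ - y²/2 - φ²) - 2g₂φ`, the
Hamiltonian `H(φ, y) = φ⁴ - (4c/3)φ³ + (4g₂ - 2g₁)φ² + 4cg₁φ + (φ - c)²y²`
is constant. -/
theorem stmt_12 (c g₁ g₂ : ℝ) (φ y : ℝ → ℝ)
    (hφ : Differentiable ℝ φ) (hy : Differentiable ℝ y)
    (heq1 : ∀ ζ : ℝ, deriv φ ζ = (1 / 2) * (φ ζ - c) ^ 2 * y ζ)
    (heq2 : ∀ ζ : ℝ, deriv y ζ =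
      (φ ζ - c) * (g₁ - (y ζ) ^ 2 / 2 - (φ ζ) ^ 2) - 2 * g₂ * φ ζ)
    (H : ℝ → ℝ → ℝ)
    (hH : ∀ p q : ℝ, H p q = p ^ 4 - (4 * c / 3) * p ^ 3
      + (4 * g₂ - 2 * g₁) * p ^ 2 + 4 * c * g₁ * p + (p - c) ^ 2 * q ^ 2) :
    ∀ ζ₁ ζ₂ : ℝ, H (φ ζ₁) (y ζ₁) = H (φ ζ₂) (y ζ₂) := by
  have hH' : H = DualKaupBoussinesq.hamiltonian c g₁ g₂ := funext fun p => funext (hH p)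
  subst hH'
  exact DualKaupBoussinesq.hamiltonian_comp_eq c g₁ g₂ hφ hy heq1 heq2
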